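/- Uniform bound on QDP fixed points: for every λ ∈ [0,1]^{X×[m]}, the fixed point θ̂^π_λ of Π^λ T^π satisfies ‖θ̂^π_λ‖_∞ ≤ (1/(1−γ)) · max( |min_{x∈X} F⁻¹_{R^π(x)}(1/(2m))|, |max_{x∈X} F̄⁻¹_{R^π(x)}((2m−1)/(2m))| ), where R^π(x) denotes the reward distribution at state x under π. -/

import Mathlib

open MeasureTheory ProbabilityTheory Set
open scoped ENNReal

/-- Generalized inverse CDF (least τ-quantile). -/
noncomputable def invCDF (ν : Measure ℝ) (τ : ℝ) : ℝ := sInf {y | τ ≤ cdf ν y}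

/-- Upper inverse CDF (greatest τ-quantile). -/
noncomputable def upInvCDF (ν : Measure ℝ) (τ : ℝ) : ℝ := sInf {y | τ < cdf ν y}

/-- Quantile level τ_i = (2i-1)/(2m), with `i : Fin m` zero-indexed. -/
noncomputable def qlevel (m : ℕ) (i : Fin m) : ℝ := (2 * (i : ℝ) + 1) / (2 * m)

/-- The uniform m-atom distribution with the given particle locations. -/
noncomputable def paramDistOne {m : ℕ} (θ : Fin m → ℝ) : Measure ℝ :=
  (m : ℝ≥0∞)⁻¹ • ∑ i : Fin m, Measure.dirac (θ i)

/-- Return-distribution function associated with quantile parameters θ. -/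
noncomputable def paramDist {X : Type*} {m : ℕ} (θ : X → Fin m → ℝ) : X → Measure ℝ :=
  fun x => paramDistOne (θ x)

/-- The distributional Bellman operator T^π. -/
noncomputable def bellman {X : Type*} [MeasurableSpace X]
    (P : X → Measure (ℝ × X)) (γ : ℝ) (η : X → Measure ℝ) : X → Measure ℝ :=
  fun x => (P x).bind (fun p => (η p.2).map (fun z => p.1 + γ * z))

/-- The quantile projection Π^λ, parameter-level output. -/
noncomputable def projParam {X : Type*} {m : ℕ} (lam : X → Fin m → ℝ)
    (η : X → Measure ℝ) : X → Fin m → ℝ :=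
  fun x i => (1 - lam x i) * invCDF (η x) (qlevel m i) + lam x i * upInvCDF (η x) (qlevel m i)

/-- The quantile projection Π^λ on return-distribution functions. -/
noncomputable def proj {X : Type*} {m : ℕ} (lam : X → Fin m → ℝ)
    (η : X → Measure ℝ) : X → Measure ℝ :=
  paramDist (projParam lam η)

/-- The projected distributional Bellman operator Π^λ T^π acting on parameters. -/
noncomputable def projBellmanParam {X : Type*} [MeasurableSpace X]
    (P : X → Measure (ℝ × X)) (γ : ℝ) {m : ℕ} (lam : X → Fin m → ℝ)
    (θ : X → Fin m → ℝ) : X → Fin m → ℝ :=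
  projParam lam (bellman P γ (paramDist θ))

/-- The cube [0,1]^{X×[m]} of interpolation parameters. -/
def unitCube (X : Type*) (m : ℕ) : Set (X → Fin m → ℝ) :=
  {lam | ∀ x i, lam x i ∈ Set.Icc (0:ℝ) 1}

/-- Wasserstein-∞ distance (valued in [0,∞]). -/
noncomputable def winf (ν ν' : Measure ℝ) : ℝ≥0∞ :=
  ⨆ t : Set.Ioo (0:ℝ) 1, ENNReal.ofReal |invCDF ν t - invCDF ν' t|

/-- Extension of w∞ to return-distribution functions: max over states. -/
noncomputable def wbar {X : Type*} (η η' : X → Measure ℝ) : ℝ≥0∞ :=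
  ⨆ x : X, winf (η x) (η' x)

/-- Wasserstein-1 distance between probability distributions on ℝ. -/
noncomputable def w1 (ν ν' : Measure ℝ) : ℝ :=
  ∫ t in Set.Ioo (0:ℝ) 1, |invCDF ν t - invCDF ν' t|

/-- Uniform m-atom distributions. -/
noncomputable def FQ (m : ℕ) : Set (Measure ℝ) :=
  {ν | ∃ z : Fin m → ℝ, ν = paramDistOne z}

/-! If `|θ| ≤ M`, every atom of `T^π η_θ (x)` is a reward shifted by at most `γ M`, so the CDF
of `T^π η_θ (x)` is sandwiched between `F_R(· - γ M)` and `F_R(· + γ M)` and its quantiles lie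
within `γ M` of those of `R^π(x)`. Both quantiles that `Π^λ` interpolates therefore lie in
`[min_x F⁻¹_R(τ_1) - γ M, max_x F̄⁻¹_R(τ_m) + γ M]`. Taking `M = ‖θ̂‖` at a fixed point gives
`‖θ̂‖ ≤ C + γ ‖θ̂‖`, where `C` is the larger of the absolute values of these two extreme
reward quantiles. -/

open Filter

section Quantile

variable {ν ρ : Measure ℝ} {τ τ' c : ℝ}

lemma nonempty_setOf_lt_cdf (ν : Measure ℝ) (hτ : τ < 1) : {y | τ < cdf ν y}.Nonempty :=
  ((tendsto_cdf_atTop ν).eventually (eventually_gt_nhds hτ)).exists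

lemma nonempty_setOf_le_cdf (ν : Measure ℝ) (hτ : τ < 1) : {y | τ ≤ cdf ν y}.Nonempty :=
  (nonempty_setOf_lt_cdf ν hτ).mono fun _ (h : τ < _) ↦ h.le

lemma bddBelow_setOf_le_cdf (ν : Measure ℝ) (hτ : 0 < τ) : BddBelow {y | τ ≤ cdf ν y} := by
  obtain ⟨b, hb⟩ := eventually_atBot.mp ((tendsto_cdf_atBot ν).eventually (eventually_lt_nhds hτ))
  exact ⟨b, fun y hy ↦ le_of_not_ge fun h ↦ (hb y h).not_ge hy⟩

lemma bddBelow_setOf_lt_cdf (ν : Measure ℝ) (hτ : 0 < τ) : BddBelow {y | τ < cdf ν y} :=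
  (bddBelow_setOf_le_cdf ν hτ).mono fun _ (h : τ < _) ↦ h.le

lemma invCDF_mono (ν : Measure ℝ) (hτ : 0 < τ) (hτ' : τ' < 1) (h : τ ≤ τ') :
    invCDF ν τ ≤ invCDF ν τ' :=
  csInf_le_csInf (bddBelow_setOf_le_cdf ν hτ) (nonempty_setOf_le_cdf ν hτ') fun _ ↦ h.trans

lemma upInvCDF_mono (ν : Measure ℝ) (hτ : 0 < τ) (hτ' : τ' < 1) (h : τ ≤ τ') :
    upInvCDF ν τ ≤ upInvCDF ν τ' :=
  csInf_le_csInf (bddBelow_setOf_lt_cdf ν hτ) (nonempty_setOf_lt_cdf ν hτ') fun _ ↦ h.trans_lt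

lemma invCDF_le_upInvCDF (ν : Measure ℝ) (hτ0 : 0 < τ) (hτ1 : τ < 1) :
    invCDF ν τ ≤ upInvCDF ν τ :=
  csInf_le_csInf (bddBelow_setOf_le_cdf ν hτ0) (nonempty_setOf_lt_cdf ν hτ1)
    fun _ (h : τ < _) ↦ h.le

lemma invCDF_le_invCDF_add_of_cdf_le (hτ0 : 0 < τ) (hτ1 : τ < 1)
    (h : ∀ y, cdf ν y ≤ cdf ρ (y + c)) : invCDF ρ τ ≤ invCDF ν τ + c := by
  rw [← sub_le_iff_le_add]
  refine le_csInf (nonempty_setOf_le_cdf ν hτ1) fun y hy ↦ ?_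
  rw [sub_le_iff_le_add]
  exact csInf_le (bddBelow_setOf_le_cdf ρ hτ0) (hy.trans (h y))

lemma upInvCDF_le_upInvCDF_add_of_cdf_le (hτ0 : 0 < τ) (hτ1 : τ < 1)
    (h : ∀ y, cdf ν y ≤ cdf ρ (y + c)) : upInvCDF ρ τ ≤ upInvCDF ν τ + c := by
  rw [← sub_le_iff_le_add]
  refine le_csInf (nonempty_setOf_lt_cdf ν hτ1) fun y hy ↦ ?_
  rw [sub_le_iff_le_add]
  exact csInf_le (bddBelow_setOf_lt_cdf ρ hτ0) (hy.trans_le (h y))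

lemma cdf_le_cdf_of_measure_Iic_le [IsProbabilityMeasure ν] [IsProbabilityMeasure ρ] {y y' : ℝ}
    (h : ν (Iic y) ≤ ρ (Iic y')) : cdf ν y ≤ cdf ρ y' := by
  rwa [← ENNReal.ofReal_le_ofReal_iff (cdf_nonneg ρ y'), ofReal_cdf, ofReal_cdf]

end Quantile

section Bellman

variable {X : Type*} [MeasurableSpace X] [Countable X] [MeasurableSingletonClass X]
  {P : X → Measure (ℝ × X)} {γ : ℝ} {η : X → Measure ℝ}

lemma bellman_apply [∀ x, SFinite (η x)] (x : X) {s : Set ℝ} (hs : MeasurableSet s) :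
    bellman P γ η x s = ∫⁻ p, η p.2 ((fun z ↦ p.1 + γ * z) ⁻¹' s) ∂P x := by
  have hkernel : Measurable fun p : ℝ × X ↦ (η p.2).map (fun z ↦ p.1 + γ * z) := by
    refine Measure.measurable_of_measurable_coe _ fun t ht ↦ ?_
    have hmap (p : ℝ × X) : (η p.2).map (fun z ↦ p.1 + γ * z) t
        = η p.2 ((fun z ↦ p.1 + γ * z) ⁻¹' t) := Measure.map_apply (by fun_prop) ht
    simp_rw [hmap]
    refine measurable_from_prod_countable_left fun x' ↦ ?_
    exact measurable_measure_prodMk_left (ν := η x') (s := {q : ℝ × ℝ | q.1 + γ * q.2 ∈ t})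
      (ht.preimage (by fun_prop))
  rw [bellman, Measure.bind_apply hs hkernel.aemeasurable]
  exact lintegral_congr fun p ↦ Measure.map_apply (by fun_prop) hs

lemma isProbabilityMeasure_bellman (hP : ∀ x, IsProbabilityMeasure (P x))
    (hη : ∀ x, IsProbabilityMeasure (η x)) (x : X) :
    IsProbabilityMeasure (bellman P γ η x) :=
  ⟨by simp [bellman_apply x MeasurableSet.univ]⟩

variable {M : ℝ}

lemma bellman_Iic_le_map_fst_Iic (hη : ∀ x, IsProbabilityMeasure (η x)) (hγ : 0 ≤ γ)
    (hηM : ∀ x, ∀ᵐ z ∂η x, |z| ≤ M) (x : X) (y : ℝ) :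
    bellman P γ η x (Iic y) ≤ (P x).map Prod.fst (Iic (y + γ * M)) := by
  rw [bellman_apply x measurableSet_Iic, Measure.map_apply measurable_fst measurableSet_Iic,
    ← lintegral_indicator_one (measurable_fst measurableSet_Iic)]
  refine lintegral_mono fun p ↦ ?_
  by_cases hp : p.1 ≤ y + γ * M
  · rw [indicator_of_mem (show p ∈ Prod.fst ⁻¹' Iic (y + γ * M) from hp)]
    exact prob_le_one
  · refine (measure_eq_zero_iff_ae_notMem.2 ?_).trans_le zero_le
    filter_upwards [hηM p.2] with z hz
    have := mul_le_mul_of_nonneg_left (neg_le_of_abs_le hz) hγ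
    simp only [mem_preimage, mem_Iic, not_le] at hp ⊢
    linarith

lemma map_fst_Iic_le_bellman_Iic (hη : ∀ x, IsProbabilityMeasure (η x)) (hγ : 0 ≤ γ)
    (hηM : ∀ x, ∀ᵐ z ∂η x, |z| ≤ M) (x : X) (y : ℝ) :
    (P x).map Prod.fst (Iic y) ≤ bellman P γ η x (Iic (y + γ * M)) := by
  rw [bellman_apply x measurableSet_Iic, Measure.map_apply measurable_fst measurableSet_Iic,
    ← lintegral_indicator_one (measurable_fst measurableSet_Iic)]
  refine lintegral_mono fun p ↦ ?_
  by_cases hp : p.1 ≤ y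
  · have hae : ∀ᵐ z ∂η p.2, z ∈ (fun z ↦ p.1 + γ * z) ⁻¹' Iic (y + γ * M) := by
      filter_upwards [hηM p.2] with z hz
      have := mul_le_mul_of_nonneg_left (le_of_abs_le hz) hγ
      simp only [mem_preimage, mem_Iic]
      linarith
    rw [indicator_of_mem (show p ∈ Prod.fst ⁻¹' Iic y from hp), Pi.one_apply,
      (ae_mem_iff_measure_eq (measurableSet_Iic.preimage (by fun_prop)).nullMeasurableSet).1 hae,
      measure_univ]
  · rw [indicator_of_notMem (show p ∉ Prod.fst ⁻¹' Iic y from hp)]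
    exact zero_le

variable {τ : ℝ}

lemma invCDF_map_fst_le_invCDF_bellman_add (hP : ∀ x, IsProbabilityMeasure (P x))
    (hη : ∀ x, IsProbabilityMeasure (η x)) (hγ : 0 ≤ γ) (hηM : ∀ x, ∀ᵐ z ∂η x, |z| ≤ M)
    (x : X) (hτ0 : 0 < τ) (hτ1 : τ < 1) :
    invCDF ((P x).map Prod.fst) τ ≤ invCDF (bellman P γ η x) τ + γ * M :=
  have := isProbabilityMeasure_bellman (γ := γ) hP hη x
  have := hP x
  have := Measure.isProbabilityMeasure_map (μ := P x) measurable_fst.aemeasurable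
  invCDF_le_invCDF_add_of_cdf_le hτ0 hτ1 fun y ↦
    cdf_le_cdf_of_measure_Iic_le (bellman_Iic_le_map_fst_Iic hη hγ hηM x y)

lemma upInvCDF_bellman_le_upInvCDF_map_fst_add (hP : ∀ x, IsProbabilityMeasure (P x))
    (hη : ∀ x, IsProbabilityMeasure (η x)) (hγ : 0 ≤ γ) (hηM : ∀ x, ∀ᵐ z ∂η x, |z| ≤ M)
    (x : X) (hτ0 : 0 < τ) (hτ1 : τ < 1) :
    upInvCDF (bellman P γ η x) τ ≤ upInvCDF ((P x).map Prod.fst) τ + γ * M :=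
  have := isProbabilityMeasure_bellman (γ := γ) hP hη x
  have := hP x
  have := Measure.isProbabilityMeasure_map (μ := P x) measurable_fst.aemeasurable
  upInvCDF_le_upInvCDF_add_of_cdf_le hτ0 hτ1 fun y ↦
    cdf_le_cdf_of_measure_Iic_le (map_fst_Iic_le_bellman_Iic hη hγ hηM x y)

end Bellman

section ParamDist

variable {m : ℕ}

lemma isProbabilityMeasure_paramDistOne (hm : 0 < m) (θ : Fin m → ℝ) :
    IsProbabilityMeasure (paramDistOne θ) :=
  ⟨by simp [paramDistOne, ENNReal.inv_mul_cancel (Nat.cast_ne_zero.2 hm.ne')]⟩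

lemma ae_abs_le_paramDistOne {θ : Fin m → ℝ} {M : ℝ} (hθ : ∀ i, |θ i| ≤ M) :
    ∀ᵐ z ∂paramDistOne θ, |z| ≤ M := by
  simp [ae_iff, paramDistOne, hθ]

lemma qlevel_mem_Icc (i : Fin m) :
    qlevel m i ∈ Icc (1 / (2 * (m : ℝ))) ((2 * m - 1) / (2 * m)) := by
  have hm : (0 : ℝ) < 2 * m := by have := i.pos; positivity
  have hi : (i : ℝ) + 1 ≤ m := by exact_mod_cast i.isLt
  rw [qlevel, mem_Icc, div_le_div_iff_of_pos_right hm, div_le_div_iff_of_pos_right hm]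
  constructor <;> linarith [(i : ℕ).cast_nonneg (α := ℝ)]

end ParamDist

lemma one_sub_mul_add_mul_mem_Icc {a b t : ℝ} (ht : t ∈ Icc 0 1) (hab : a ≤ b) :
    (1 - t) * a + t * b ∈ Icc a b :=
  convex_Icc a b (left_mem_Icc.2 hab) (right_mem_Icc.2 hab) (sub_nonneg.2 ht.2) ht.1
    (sub_add_cancel 1 t)

lemma abs_le_max_abs_add_of_mem_Icc {a b d t : ℝ} (ht : t ∈ Icc (a - d) (b + d)) :
    |t| ≤ max |a| |b| + d :=
  abs_le.2 ⟨by linarith [ht.1, neg_abs_le a, le_max_left |a| |b|],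
    by linarith [ht.2, le_abs_self b, le_max_right |a| |b|]⟩

lemma projBellmanParam_mem_Icc {X : Type*} [MeasurableSpace X] [Finite X]
    [MeasurableSingletonClass X] {P : X → Measure (ℝ × X)} (hP : ∀ x, IsProbabilityMeasure (P x))
    {γ : ℝ} (hγ : 0 ≤ γ) {m : ℕ} {lam : X → Fin m → ℝ} (hlam : lam ∈ unitCube X m)
    {θ : X → Fin m → ℝ} {M : ℝ} (hθ : ∀ x i, |θ x i| ≤ M) (x : X) (i : Fin m) :
    projBellmanParam P γ lam θ x i ∈
      Icc ((⨅ x, invCDF ((P x).map Prod.fst) (1 / (2 * (m : ℝ)))) - γ * M)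
        ((⨆ x, upInvCDF ((P x).map Prod.fst) ((2 * (m : ℝ) - 1) / (2 * m))) + γ * M) := by
  have hm : (0 : ℝ) < 2 * m := by have := i.pos; positivity
  have hlo : 0 < 1 / (2 * (m : ℝ)) := by positivity
  have hhi : (2 * (m : ℝ) - 1) / (2 * m) < 1 := by rw [div_lt_one hm]; linarith
  obtain ⟨hτlo, hτhi⟩ := qlevel_mem_Icc i
  have hτ0 := hlo.trans_le hτlo
  have hτ1 := hτhi.trans_lt hhi
  have hη (x : X) : IsProbabilityMeasure (paramDist θ x) :=
    isProbabilityMeasure_paramDistOne i.pos (θ x)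
  have hηM (x : X) : ∀ᵐ z ∂paramDist θ x, |z| ≤ M := ae_abs_le_paramDistOne (hθ x)
  set ν := bellman P γ (paramDist θ) x
  have hproj : projBellmanParam P γ lam θ x i ∈
      Icc (invCDF ν (qlevel m i)) (upInvCDF ν (qlevel m i)) :=
    one_sub_mul_add_mul_mem_Icc (hlam x i) (invCDF_le_upInvCDF ν hτ0 hτ1)
  constructor
  · calc (⨅ x, invCDF ((P x).map Prod.fst) (1 / (2 * (m : ℝ)))) - γ * M
        ≤ invCDF ((P x).map Prod.fst) (1 / (2 * (m : ℝ))) - γ * M := by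
          gcongr; exact ciInf_le (finite_range _).bddBelow x
      _ ≤ invCDF ((P x).map Prod.fst) (qlevel m i) - γ * M := by
          gcongr; exact invCDF_mono _ hlo hτ1 hτlo
      _ ≤ invCDF ν (qlevel m i) := by
          linarith [invCDF_map_fst_le_invCDF_bellman_add hP hη hγ hηM x hτ0 hτ1]
      _ ≤ _ := hproj.1
  · calc projBellmanParam P γ lam θ x i ≤ upInvCDF ν (qlevel m i) := hproj.2
      _ ≤ upInvCDF ((P x).map Prod.fst) (qlevel m i) + γ * M :=
          upInvCDF_bellman_le_upInvCDF_map_fst_add hP hη hγ hηM x hτ0 hτ1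
      _ ≤ upInvCDF ((P x).map Prod.fst) ((2 * (m : ℝ) - 1) / (2 * m)) + γ * M := by
          gcongr; exact upInvCDF_mono _ hτ0 hhi hτhi
      _ ≤ _ := by
          gcongr
          exact le_ciSup (finite_range fun x ↦ upInvCDF ((P x).map Prod.fst) _).bddAbove x

theorem qdp_fixed_point_bound_general
    {X : Type*} [Fintype X] [MeasurableSpace X] [MeasurableSingletonClass X]
    (P : X → Measure (ℝ × X)) (hP : ∀ x, IsProbabilityMeasure (P x))
    (γ : ℝ) (hγ0 : 0 ≤ γ) (hγ1 : γ < 1) {m : ℕ}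
    (lam : X → Fin m → ℝ) (hlam : lam ∈ unitCube X m)
    (θhat : X → Fin m → ℝ) (hfix : projBellmanParam P γ lam θhat = θhat) :
    ‖θhat‖ ≤ (1 / (1 - γ)) *
      max |⨅ x : X, invCDF ((P x).map Prod.fst) (1 / (2 * (m:ℝ)))|
          |⨆ x : X, upInvCDF ((P x).map Prod.fst) ((2 * (m:ℝ) - 1) / (2 * (m:ℝ)))| := by
  set C := max |⨅ x : X, invCDF ((P x).map Prod.fst) (1 / (2 * (m:ℝ)))|
    |⨆ x : X, upInvCDF ((P x).map Prod.fst) ((2 * (m:ℝ) - 1) / (2 * (m:ℝ)))|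
  have hθ x i : |θhat x i| ≤ ‖θhat‖ :=
    (norm_le_pi_norm (θhat x) i).trans (norm_le_pi_norm θhat x)
  have hcontract : ‖θhat‖ ≤ C + γ * ‖θhat‖ := by
    have hC : 0 ≤ C + γ * ‖θhat‖ := by positivity
    refine (pi_norm_le_iff_of_nonneg hC).2 fun x ↦ (pi_norm_le_iff_of_nonneg hC).2 fun i ↦ ?_
    rw [Real.norm_eq_abs, ← congr_fun₂ hfix x i]
    exact abs_le_max_abs_add_of_mem_Icc (projBellmanParam_mem_Icc hP hγ0 hlam hθ x i)
  rw [one_div_mul_eq_div, le_div_iff₀ (sub_pos.2 hγ1)]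
  linarith

/-- Uniform bound on QDP fixed points:
`‖θ̂^π_λ‖_∞ ≤ (1/(1−γ)) · max(|min_x F⁻¹_{R^π(x)}(1/(2m))|, |max_x F̄⁻¹_{R^π(x)}((2m−1)/(2m))|)`,
where `R^π(x)` is the reward marginal of `P^π(·|x)`. -/
theorem qdp_fixed_point_bound
    {X : Type*} [Fintype X] [Nonempty X] [MeasurableSpace X] [MeasurableSingletonClass X]
    (P : X → Measure (ℝ × X)) (hP : ∀ x, IsProbabilityMeasure (P x))
    (hPmean : ∀ x, Integrable (fun p : ℝ × X => p.1) (P x))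
    (γ : ℝ) (hγ0 : 0 ≤ γ) (hγ1 : γ < 1) {m : ℕ} (hm : 0 < m)
    (lam : X → Fin m → ℝ) (hlam : lam ∈ unitCube X m)
    (θhat : X → Fin m → ℝ) (hfix : projBellmanParam P γ lam θhat = θhat) :
    ‖θhat‖ ≤ (1 / (1 - γ)) *
      max |⨅ x : X, invCDF ((P x).map Prod.fst) (1 / (2 * (m:ℝ)))|
          |⨆ x : X, upInvCDF ((P x).map Prod.fst) ((2 * (m:ℝ) - 1) / (2 * (m:ℝ)))| :=
  qdp_fixed_point_bound_general P hP γ hγ0 hγ1 lam hlam θhat hfix
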